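/- arXiv:1701.04105 — 3 statements merged into one kernel-verified Lean document; each statement's English description precedes it below -/
import Mathlib

section
/- Let k ∈ {5,6}, let G be a star k-critical subcubic simple graph, let x be a vertex of degree 1 with neighbor y, write N_G(y) = {x, y₁, y₂} with d_G(y₁) ≥ d_G(y₂), let H = G − x, and let c be a star k-edge-coloring of H with color set {1,…,k}. If d_G(y₂) = k − 3, then for each i ∈ {1,2} and each vertex v ∈ N_H(y_i) \ {y}, the color c(y y_i) belongs to c(v) and d_G(v) ≥ 2; moreover, the closed neighborhoods satisfy N_G[y₁] ∩ N_G[y₂] = {y}. -/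
open SimpleGraph

/-- A star `k`-edge-coloring of `G`: a proper edge-coloring (adjacent edges get
distinct colors) such that no path or cycle of length four is bicolored, i.e.
no walk on four pairwise-distinct edges has its first and third edges equally
colored and its second and fourth edges equally colored. -/
def IsStarEdgeColoring {V : Type*} (G : SimpleGraph V) (k : ℕ)
    (c : Sym2 V → Fin k) : Prop :=
  (∀ e₁ ∈ G.edgeSet, ∀ e₂ ∈ G.edgeSet, e₁ ≠ e₂ → (∃ v, v ∈ e₁ ∧ v ∈ e₂) →
      c e₁ ≠ c e₂) ∧
  (∀ v₀ v₁ v₂ v₃ v₄ : V, G.Adj v₀ v₁ → G.Adj v₁ v₂ → G.Adj v₂ v₃ → G.Adj v₃ v₄ →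
    ([s(v₀, v₁), s(v₁, v₂), s(v₂, v₃), s(v₃, v₄)] : List (Sym2 V)).Pairwise (· ≠ ·) →
    ¬(c s(v₀, v₁) = c s(v₂, v₃) ∧ c s(v₁, v₂) = c s(v₃, v₄)))

/-- `G` admits a star `k`-edge-coloring; equivalently, `χ'_s(G) ≤ k`. -/
def StarEdgeColorable {V : Type*} (G : SimpleGraph V) (k : ℕ) : Prop :=
  ∃ c : Sym2 V → Fin k, IsStarEdgeColoring G k c

/-- The graph `G - x` obtained from `G` by deleting the vertex `x`
(keeping the ambient vertex type; `x` becomes isolated, which does not affect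
edge-colorings). -/
def SimpleGraph.deleteVert {V : Type*} (G : SimpleGraph V) (x : V) : SimpleGraph V where
  Adj u w := G.Adj u w ∧ u ≠ x ∧ w ≠ x
  symm := ⟨fun u w h => ⟨h.1.symm, h.2.2, h.2.1⟩⟩
  loopless := ⟨fun u h => G.loopless.irrefl u h.1⟩

/-- `G` is star `k`-critical: `χ'_s(G) > k` but `χ'_s(G - v) ≤ k` for every vertex `v`. -/
def StarCritical {V : Type*} (G : SimpleGraph V) (k : ℕ) : Prop :=
  ¬ StarEdgeColorable G k ∧ ∀ v : V, StarEdgeColorable (G.deleteVert v) k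

/-- The set of colors used by `c` on edges of `H` incident with `u`. -/
def colorsAt {V : Type*} (H : SimpleGraph V) {k : ℕ} (c : Sym2 V → Fin k) (u : V) :
    Set (Fin k) :=
  {a | ∃ w, H.Adj u w ∧ c s(u, w) = a}

/-! Since `G` is not star `k`-edge-colourable, no colour `α` extends `c` to the pendant edge `xy`:
either `α` already appears at `y`, or `α = c(yᵢv)` for a neighbour `v ≠ y` of `yᵢ` at which
`c(yyᵢ)` appears (otherwise `x y yᵢ v w` is bicoloured). So the `k` colours are covered by
`c(yy₁)`, `c(yy₂)` and at most `(d(y₁) - 1) + (d(y₂) - 1) ≤ k - 2` further colours. Equality forces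
every neighbour `v ≠ y` of `yᵢ` to see `c(yyᵢ)` and all covering colours to be distinct; an edge
`y₁y₂` would then be counted twice, and a common neighbour `z ≠ y` would see four colours. -/

section

variable {V : Type*} {k : ℕ}

lemma deleteVert_le (G : SimpleGraph V) (x : V) : G.deleteVert x ≤ G := fun _ _ h => h.1

lemma deleteVert_adj_iff_of_not_adj {G : SimpleGraph V} {x u : V} (hu : u ≠ x)
    (hux : ¬ G.Adj u x) (w : V) : (G.deleteVert x).Adj u w ↔ G.Adj u w :=
  ⟨fun h => h.1, fun h => ⟨h, hu, by rintro rfl; exact hux h⟩⟩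

lemma forall_incident_ne_iff {β : Type*} {G : SimpleGraph V} {c : Sym2 V → β} :
    (∀ e₁ ∈ G.edgeSet, ∀ e₂ ∈ G.edgeSet, e₁ ≠ e₂ → (∃ v, v ∈ e₁ ∧ v ∈ e₂) → c e₁ ≠ c e₂) ↔
      ∀ ⦃u v w⦄, G.Adj u v → G.Adj u w → v ≠ w → c s(u, v) ≠ c s(u, w) := by
  refine ⟨fun h u v w huv huw hvw => h _ huv _ huw (mt Sym2.congr_right.mp hvw)
    ⟨u, Sym2.mem_mk_left _ _, Sym2.mem_mk_left _ _⟩, ?_⟩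
  rintro h e₁ he₁ e₂ he₂ hne ⟨u, hu₁, hu₂⟩
  obtain ⟨v, rfl⟩ := Sym2.mem_iff_exists.mp hu₁
  obtain ⟨w, rfl⟩ := Sym2.mem_iff_exists.mp hu₂
  exact h he₁ he₂ (fun hvw => hne (hvw ▸ rfl))

lemma IsStarEdgeColoring.ne_of_adj {G : SimpleGraph V} {c : Sym2 V → Fin k}
    (hc : IsStarEdgeColoring G k c) {u v w : V} (huv : G.Adj u v) (huw : G.Adj u w)
    (hvw : v ≠ w) : c s(u, v) ≠ c s(u, w) :=
  forall_incident_ne_iff.mp hc.1 huv huw hvw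

lemma card_le_degree_of_subset_colorsAt [Fintype V] {G H : SimpleGraph V} [DecidableRel G.Adj]
    (hHG : H ≤ G) {c : Sym2 V → Fin k} {u : V} {s : Finset (Fin k)}
    (hs : (s : Set (Fin k)) ⊆ colorsAt H c u) : s.card ≤ G.degree u := by
  classical
  calc s.card ≤ ((G.neighborFinset u).image fun w => c s(u, w)).card :=
        Finset.card_le_card fun a ha => by
          obtain ⟨w, hw, rfl⟩ := hs ha
          exact Finset.mem_image_of_mem _ ((G.mem_neighborFinset u w).mpr (hHG hw))
    _ ≤ G.degree u := Finset.card_image_le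

lemma two_le_degree_of_mem_colorsAt [Fintype V] {G H : SimpleGraph V} [DecidableRel G.Adj]
    (hHG : H ≤ G) {c : Sym2 V → Fin k} (hc : IsStarEdgeColoring H k c) {y u v : V}
    (hyu : H.Adj y u) (huv : H.Adj u v) (hvy : v ≠ y) (h : c s(y, u) ∈ colorsAt H c v) :
    2 ≤ G.degree v := by
  have hne : c s(v, u) ≠ c s(y, u) := by
    rw [Sym2.eq_swap, Sym2.eq_swap (a := y)]
    exact hc.ne_of_adj huv hyu.symm hvy
  calc 2 = ({c s(v, u), c s(y, u)} : Finset (Fin k)).card := (Finset.card_pair hne).symm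
    _ ≤ G.degree v := card_le_degree_of_subset_colorsAt hHG <| by
        rw [Finset.coe_pair, Set.insert_subset_iff, Set.singleton_subset_iff]
        exact ⟨⟨u, huv.symm, rfl⟩, h⟩

end

section

variable {V : Type*} {k : ℕ} {G : SimpleGraph V} {x y : V} {c : Sym2 V → Fin k} {α : Fin k}

open Classical in
noncomputable def extendPendant (c : Sym2 V → Fin k) (x y : V) (α : Fin k) : Sym2 V → Fin k :=
  fun e => if e = s(x, y) then α else c e

lemma extendPendant_xy : extendPendant c x y α s(x, y) = α := if_pos rfl

lemma extendPendant_yx : extendPendant c x y α s(y, x) = α := by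
  rw [Sym2.eq_swap]
  exact extendPendant_xy

lemma extendPendant_of_ne {a b : V} (ha : a ≠ x) (hb : b ≠ x) :
    extendPendant c x y α s(a, b) = c s(a, b) :=
  if_neg fun h => by rcases Sym2.eq_iff.mp h with ⟨h, -⟩ | ⟨-, h⟩ <;> contradiction

lemma ne_of_adj_of_adj_of_pendant (hx : ∀ w, G.Adj x w ↔ w = y) {a b d : V} (hab : G.Adj a b)
    (hbd : G.Adj b d) (hne : s(a, b) ≠ s(b, d)) : b ≠ x := by
  rintro rfl
  rw [(hx a).mp hab.symm, (hx d).mp hbd] at hne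
  exact hne Sym2.eq_swap

lemma extendPendant_ne_of_adj (hx : ∀ w, G.Adj x w ↔ w = y)
    (hc : IsStarEdgeColoring (G.deleteVert x) k c) (hαy : α ∉ colorsAt (G.deleteVert x) c y)
    {u v w : V} (huv : G.Adj u v) (huw : G.Adj u w) (hvw : v ≠ w) :
    extendPendant c x y α s(u, v) ≠ extendPendant c x y α s(u, w) := by
  have hyx : y ≠ x := ((hx y).mpr rfl).ne'
  have hpendant : ∀ {w}, G.Adj y w → w ≠ x →
      extendPendant c x y α s(y, x) ≠ extendPendant c x y α s(y, w) := fun hyw hw h =>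
    hαy ⟨_, ⟨hyw, hyx, hw⟩, by
      rw [← extendPendant_of_ne (c := c) (y := y) (α := α) hyx hw, ← h, extendPendant_yx]⟩
  by_cases hu : u = x
  · subst u
    exact absurd (((hx v).mp huv).trans ((hx w).mp huw).symm) hvw
  by_cases hv : v = x
  · subst v
    obtain rfl := (hx u).mp huv.symm
    exact hpendant huw (Ne.symm hvw)
  by_cases hw : w = x
  · subst w
    obtain rfl := (hx u).mp huw.symm
    exact (hpendant huv hvw).symm
  rw [extendPendant_of_ne hu hv, extendPendant_of_ne hu hw]
  exact hc.ne_of_adj ⟨huv, hu, hv⟩ ⟨huw, hu, hw⟩ hvw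

lemma not_bicolored_of_pendant_start (hx : ∀ w, G.Adj x w ↔ w = y)
    (hα : ∀ u v w, (G.deleteVert x).Adj y u → (G.deleteVert x).Adj u v →
      (G.deleteVert x).Adj v w → c s(v, w) = c s(y, u) → α ≠ c s(u, v))
    {a b d : V} (hya : G.Adj y a) (hab : G.Adj a b) (hbd : G.Adj b d) (ha : a ≠ x) (hb : b ≠ x)
    (hd : d ≠ x) (h₁ : α = extendPendant c x y α s(a, b))
    (h₂ : extendPendant c x y α s(y, a) = extendPendant c x y α s(b, d)) : False := by
  have hyx : y ≠ x := ((hx y).mpr rfl).ne'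
  rw [extendPendant_of_ne ha hb] at h₁
  rw [extendPendant_of_ne hyx ha, extendPendant_of_ne hb hd] at h₂
  exact hα a b d ⟨hya, hyx, ha⟩ ⟨hab, ha, hb⟩ ⟨hbd, hb, hd⟩ h₂.symm h₁

theorem IsStarEdgeColoring.starEdgeColorable_of_pendant (hx : ∀ w, G.Adj x w ↔ w = y)
    (hc : IsStarEdgeColoring (G.deleteVert x) k c) (hαy : α ∉ colorsAt (G.deleteVert x) c y)
    (hα : ∀ u v w, (G.deleteVert x).Adj y u → (G.deleteVert x).Adj u v →
      (G.deleteVert x).Adj v w → c s(v, w) = c s(y, u) → α ≠ c s(u, v)) :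
    StarEdgeColorable G k := by
  refine ⟨extendPendant c x y α,
    forall_incident_ne_iff.mpr fun _ _ _ => extendPendant_ne_of_adj hx hc hαy, ?_⟩
  intro v₀ v₁ v₂ v₃ v₄ h01 h12 h23 h34 hpw ⟨h13, h24⟩
  have hne := hpw
  simp only [List.pairwise_cons, List.mem_cons, List.not_mem_nil, or_false, forall_eq_or_imp,
    forall_eq, List.Pairwise.nil, and_true] at hne
  obtain ⟨⟨e12, -, e14⟩, ⟨e23, -⟩, e34, -⟩ := hne
  have hv₁ := ne_of_adj_of_adj_of_pendant hx h01 h12 e12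
  have hv₂ := ne_of_adj_of_adj_of_pendant hx h12 h23 e23
  have hv₃ := ne_of_adj_of_adj_of_pendant hx h23 h34 e34
  by_cases hv₀ : v₀ = x
  · subst v₀
    obtain rfl := (hx v₁).mp h01
    have hv₄ : v₄ ≠ x := by
      rintro rfl
      rw [(hx v₃).mp h34.symm] at e14
      exact e14 Sym2.eq_swap
    exact not_bicolored_of_pendant_start hx hα h12 h23 h34 hv₂ hv₃ hv₄
      (by rw [← h13, extendPendant_xy]) h24
  by_cases hv₄ : v₄ = x
  · subst v₄
    obtain rfl := (hx v₃).mp h34.symm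
    -- read the path backwards, so that it starts with `xy`
    refine not_bicolored_of_pendant_start hx hα h23.symm h12.symm h01.symm hv₂ hv₁ hv₀ ?_ ?_
    · rw [Sym2.eq_swap, h24, extendPendant_yx]
    · rw [Sym2.eq_swap, ← h13, Sym2.eq_swap]
  rw [extendPendant_of_ne hv₀ hv₁, extendPendant_of_ne hv₂ hv₃] at h13
  rw [extendPendant_of_ne hv₁ hv₂, extendPendant_of_ne hv₃ hv₄] at h24
  exact hc.2 v₀ v₁ v₂ v₃ v₄ ⟨h01, hv₀, hv₁⟩ ⟨h12, hv₁, hv₂⟩ ⟨h23, hv₂, hv₃⟩ ⟨h34, hv₃, hv₄⟩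
    hpw ⟨h13, h24⟩
end

section

variable {V : Type*} [Fintype V] {k : ℕ}

open Classical in
/-- Colouring a pendant edge at `y` like `uv`, for such a `v`, creates a bicoloured path
through `y u v`. -/
noncomputable def blockingNeighbors (H : SimpleGraph V) (c : Sym2 V → Fin k) (y u : V) :
    Finset V :=
  {v | H.Adj u v ∧ v ≠ y ∧ c s(y, u) ∈ colorsAt H c v}

def AllColorsBlocked (H : SimpleGraph V) (c : Sym2 V → Fin k) (y : V) : Prop :=
  ∀ α, α ∈ colorsAt H c y ∨ ∃ u, H.Adj y u ∧ ∃ v ∈ blockingNeighbors H c y u, α = c s(u, v)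

lemma mem_blockingNeighbors {H : SimpleGraph V} {c : Sym2 V → Fin k} {y u v : V} :
    v ∈ blockingNeighbors H c y u ↔ H.Adj u v ∧ v ≠ y ∧ c s(y, u) ∈ colorsAt H c v := by
  simp [blockingNeighbors]

variable {G H : SimpleGraph V} [DecidableRel G.Adj] {c : Sym2 V → Fin k}

lemma blockingNeighbors_subset [DecidableEq V] (hHG : H ≤ G) (y u : V) :
    blockingNeighbors H c y u ⊆ (G.neighborFinset u).erase y := fun v hv => by
  obtain ⟨huv, hvy, -⟩ := mem_blockingNeighbors.mp hv
  exact Finset.mem_erase.mpr ⟨hvy, (mem_neighborFinset _ _ _).mpr (hHG huv)⟩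

lemma card_blockingNeighbors_lt (hHG : H ≤ G) {y u : V} (huy : H.Adj u y) :
    (blockingNeighbors H c y u).card < G.degree u := by
  classical
  have := Finset.card_le_card (blockingNeighbors_subset (c := c) hHG y u)
  have := Finset.card_erase_add_one ((mem_neighborFinset _ _ _).mpr (hHG huy))
  rw [card_neighborFinset_eq_degree] at this
  omega

lemma mem_colorsAt_of_degree_le (hHG : H ≤ G) {y u v : V} (huy : H.Adj u y)
    (hdeg : G.degree u ≤ (blockingNeighbors H c y u).card + 1) (huv : H.Adj u v) (hvy : v ≠ y) :
    c s(y, u) ∈ colorsAt H c v := by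
  classical
  by_contra hv
  have hsub : blockingNeighbors H c y u ⊆ ((G.neighborFinset u).erase y).erase v :=
    fun w hw => Finset.mem_erase.mpr
      ⟨by rintro rfl; exact hv (mem_blockingNeighbors.mp hw).2.2,
        blockingNeighbors_subset hHG y u hw⟩
  have := Finset.card_le_card hsub
  have := Finset.card_erase_add_one
    (Finset.mem_erase.mpr ⟨hvy, (mem_neighborFinset _ _ _).mpr (hHG huv)⟩)
  have := Finset.card_erase_add_one ((mem_neighborFinset _ _ _).mpr (hHG huy))
  rw [card_neighborFinset_eq_degree] at this
  omega

end

section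

variable {V : Type*} [Fintype V] {k : ℕ}

theorem IsStarEdgeColoring.allColorsBlocked {G : SimpleGraph V} {x y : V}
    (hG : ¬ StarEdgeColorable G k) (hx : ∀ w, G.Adj x w ↔ w = y) {c : Sym2 V → Fin k}
    (hc : IsStarEdgeColoring (G.deleteVert x) k c) : AllColorsBlocked (G.deleteVert x) c y := by
  intro α
  by_contra! h
  refine hG (hc.starEdgeColorable_of_pendant hx h.1 fun u v w hyu huv hvw hvwc => ?_)
  by_cases hvy : v = y
  · subst v
    rintro rfl
    exact h.1 ⟨u, hyu, congrArg c Sym2.eq_swap⟩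
  · exact h.2 u hyu v (mem_blockingNeighbors.mpr ⟨huv, hvy, w, hvw, hvwc⟩)

variable {G H : SimpleGraph V} [DecidableRel G.Adj] {c : Sym2 V → Fin k} {y y₁ y₂ : V}

theorem blockingNeighbors_tight (hHG : H ≤ G) (hy : ∀ w, H.Adj y w ↔ w = y₁ ∨ w = y₂)
    (hdeg : G.degree y₁ + G.degree y₂ ≤ k)
    (hblocked : AllColorsBlocked H c y) :
    (∀ u, H.Adj y u → ∀ v, H.Adj u v → v ≠ y → c s(y, u) ∈ colorsAt H c v) ∧
    (∀ u, H.Adj y u → ∀ v ∈ blockingNeighbors H c y u, c s(u, v) ∉ colorsAt H c y) ∧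
    ∀ v ∈ blockingNeighbors H c y y₁, ∀ v' ∈ blockingNeighbors H c y y₂,
      c s(y₁, v) ≠ c s(y₂, v') := by
  classical
  set C : V → Finset (Fin k) := fun u => (blockingNeighbors H c y u).image fun v => c s(u, v)
  set P : Finset (Fin k) := {c s(y, y₁), c s(y, y₂)}
  have hyy₁ : H.Adj y y₁ := (hy y₁).2 (Or.inl rfl)
  have hyy₂ : H.Adj y y₂ := (hy y₂).2 (Or.inr rfl)
  have hP : ∀ α ∈ colorsAt H c y, α ∈ P := by
    rintro _ ⟨w, hw, rfl⟩
    rcases (hy w).1 hw with rfl | rfl <;> simp [P]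
  have hC : ∀ u, ∀ v ∈ blockingNeighbors H c y u, c s(u, v) ∈ C u :=
    fun u v hv => Finset.mem_image_of_mem _ hv
  have hk : k ≤ (P ∪ C y₁ ∪ C y₂).card := by
    calc k = (Finset.univ : Finset (Fin k)).card := (Finset.card_fin k).symm
      _ ≤ _ := Finset.card_le_card fun α _ => ?_
    rcases hblocked α with h | ⟨u, hyu, v, hv, rfl⟩
    · simp [hP α h]
    · rcases (hy u).1 hyu with rfl | rfl <;> simp [hC _ v hv]
  have : (blockingNeighbors H c y y₁).card < G.degree y₁ :=
    card_blockingNeighbors_lt hHG hyy₁.symm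
  have : (blockingNeighbors H c y y₂).card < G.degree y₂ :=
    card_blockingNeighbors_lt hHG hyy₂.symm
  have := Finset.card_union_le (P ∪ C y₁) (C y₂)
  have := Finset.card_union_le P (C y₁)
  have : P.card ≤ 2 := Finset.card_le_two
  have : (C y₁).card ≤ (blockingNeighbors H c y y₁).card := Finset.card_image_le
  have : (C y₂).card ≤ (blockingNeighbors H c y y₂).card := Finset.card_image_le
  have hP₁ : Disjoint P (C y₁) := Finset.card_union_eq_card_add_card.mp (by omega)
  have hP₁₂ : Disjoint (P ∪ C y₁) (C y₂) := Finset.card_union_eq_card_add_card.mp (by omega)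
  refine ⟨fun u hyu v huv hvy => ?_, fun u hyu v hv hcv => ?_, fun v hv v' hv' h => ?_⟩
  · rcases (hy u).1 hyu with rfl | rfl <;>
      exact mem_colorsAt_of_degree_le hHG hyu.symm (by omega) huv hvy
  · rcases (hy u).1 hyu with rfl | rfl
    · exact Finset.disjoint_left.mp hP₁ (hP _ hcv) (hC _ v hv)
    · exact Finset.disjoint_left.mp hP₁₂ (Finset.mem_union_left _ (hP _ hcv)) (hC _ v hv)
  · exact Finset.disjoint_left.mp hP₁₂ (Finset.mem_union_right _ (hC _ v hv)) (h ▸ hC _ v' hv')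

end

section

variable {V : Type*} [Fintype V] {k : ℕ} {G H : SimpleGraph V} [DecidableRel G.Adj]
  {c : Sym2 V → Fin k} {y y₁ y₂ : V}

theorem not_adj_of_blocked (hHG : H ≤ G) (hy : ∀ w, H.Adj y w ↔ w = y₁ ∨ w = y₂)
    (hdeg : G.degree y₁ + G.degree y₂ ≤ k)
    (hblocked : AllColorsBlocked H c y) :
    ¬ H.Adj y₁ y₂ := by
  intro h
  obtain ⟨hseen, -, hdistinct⟩ := blockingNeighbors_tight hHG hy hdeg hblocked
  have hyy₁ : H.Adj y y₁ := (hy y₁).2 (Or.inl rfl)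
  have hyy₂ : H.Adj y y₂ := (hy y₂).2 (Or.inr rfl)
  refine hdistinct y₂ ?_ y₁ ?_ (congrArg c Sym2.eq_swap)
  · exact mem_blockingNeighbors.mpr ⟨h, hyy₂.ne', hseen y₁ hyy₁ y₂ h hyy₂.ne'⟩
  · exact mem_blockingNeighbors.mpr ⟨h.symm, hyy₁.ne', hseen y₂ hyy₂ y₁ h.symm hyy₁.ne'⟩

theorem eq_of_adj_of_adj_of_blocked (hHG : H ≤ G) (hc : IsStarEdgeColoring H k c)
    (hy : ∀ w, H.Adj y w ↔ w = y₁ ∨ w = y₂) (hy₁y₂ : y₁ ≠ y₂)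
    (hdeg : G.degree y₁ + G.degree y₂ ≤ k)
    (hblocked : AllColorsBlocked H c y)
    {z : V} (hz₁ : H.Adj y₁ z) (hz₂ : H.Adj y₂ z) (hz : G.degree z ≤ 3) : z = y := by
  classical
  by_contra hzy
  obtain ⟨hseen, hfresh, hdistinct⟩ := blockingNeighbors_tight hHG hy hdeg hblocked
  have hyy₁ : H.Adj y y₁ := (hy y₁).2 (Or.inl rfl)
  have hyy₂ : H.Adj y y₂ := (hy y₂).2 (Or.inr rfl)
  have hb₁ := mem_blockingNeighbors.mpr ⟨hz₁, hzy, hseen y₁ hyy₁ z hz₁ hzy⟩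
  have hb₂ := mem_blockingNeighbors.mpr ⟨hz₂, hzy, hseen y₂ hyy₂ z hz₂ hzy⟩
  have hy₁ : c s(y, y₁) ∈ colorsAt H c y := ⟨y₁, hyy₁, rfl⟩
  have hy₂ : c s(y, y₂) ∈ colorsAt H c y := ⟨y₂, hyy₂, rfl⟩
  have h₁ := hfresh y₁ hyy₁ z hb₁
  have h₂ := hfresh y₂ hyy₂ z hb₂
  have hcard : ({c s(y₁, z), c s(y₂, z), c s(y, y₁), c s(y, y₂)} : Finset (Fin k)).card = 4 := by
    rw [Finset.card_insert_of_notMem, Finset.card_insert_of_notMem,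
      Finset.card_pair (hc.ne_of_adj hyy₁ hyy₂ hy₁y₂)]
    · simp only [Finset.mem_insert, Finset.mem_singleton, not_or]
      exact ⟨fun h => h₂ (h ▸ hy₁), fun h => h₂ (h ▸ hy₂)⟩
    · simp only [Finset.mem_insert, Finset.mem_singleton, not_or]
      exact ⟨hdistinct z hb₁ z hb₂, fun h => h₁ (h ▸ hy₁), fun h => h₁ (h ▸ hy₂)⟩
  have := card_le_degree_of_subset_colorsAt (c := c) hHG (u := z)
    (s := {c s(y₁, z), c s(y₂, z), c s(y, y₁), c s(y, y₂)}) <| by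
    simp only [Finset.coe_insert, Finset.coe_singleton, Set.insert_subset_iff,
      Set.singleton_subset_iff]
    exact ⟨⟨y₁, hz₁.symm, congrArg c Sym2.eq_swap⟩, ⟨y₂, hz₂.symm, congrArg c Sym2.eq_swap⟩,
      hseen y₁ hyy₁ z hz₁ hzy, hseen y₂ hyy₂ z hz₂ hzy⟩
  omega

end

lemma adj_iff_of_degree_eq_one {V : Type*} {G : SimpleGraph V} [Fintype V] [DecidableRel G.Adj]
    {x y : V} (hx : G.degree x = 1) (hxy : G.Adj x y) (w : V) : G.Adj x w ↔ w = y :=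
  ⟨fun h => (degree_eq_one_iff_existsUnique_adj.mp hx).unique h hxy, fun h => h ▸ hxy⟩

lemma deleteVert_adj_iff_of_neighborSet_eq {V : Type*} {G : SimpleGraph V} {x y y₁ y₂ : V}
    (hN : G.neighborSet y = {x, y₁, y₂}) (hyx : y ≠ x) (hxy₁ : x ≠ y₁) (hxy₂ : x ≠ y₂) (w : V) :
    (G.deleteVert x).Adj y w ↔ w = y₁ ∨ w = y₂ := by
  change G.Adj y w ∧ y ≠ x ∧ w ≠ x ↔ _
  rw [← mem_neighborSet, hN, Set.mem_insert_iff, Set.mem_insert_iff, Set.mem_singleton_iff]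
  constructor
  · rintro ⟨rfl | h, -, hw⟩
    exacts [absurd rfl hw, h]
  · rintro (rfl | rfl)
    exacts [⟨Or.inr (Or.inl rfl), hyx, Ne.symm hxy₁⟩, ⟨Or.inr (Or.inr rfl), hyx, Ne.symm hxy₂⟩]

lemma inter_insert_neighborSet_eq_singleton {V : Type*} {G : SimpleGraph V} {y y₁ y₂ : V}
    (h₁ : G.Adj y y₁) (h₂ : G.Adj y y₂) (hne : y₁ ≠ y₂) (hnadj : ¬ G.Adj y₁ y₂)
    (hcommon : ∀ z, G.Adj y₁ z → G.Adj y₂ z → z = y) :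
    insert y₁ (G.neighborSet y₁) ∩ insert y₂ (G.neighborSet y₂) = {y} := by
  ext z
  simp only [Set.mem_inter_iff, Set.mem_insert_iff, mem_neighborSet, Set.mem_singleton_iff]
  constructor
  · rintro ⟨rfl | hz₁, rfl | hz₂⟩
    · exact absurd rfl hne
    · exact absurd hz₂.symm hnadj
    · exact absurd hz₁ hnadj
    · exact hcommon z hz₁ hz₂
  · rintro rfl
    exact ⟨Or.inr h₁.symm, Or.inr h₂.symm⟩

theorem lemma1c_general {V : Type*} [Fintype V] (G : SimpleGraph V)
    [DecidableRel G.Adj] (hsub : ∀ v : V, G.degree v ≤ 3)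
    (k : ℕ) (hcrit : StarCritical G k)
    (x y y₁ y₂ : V) (hx : G.degree x = 1) (hxy : G.Adj x y)
    (hxy₁ : x ≠ y₁) (hxy₂ : x ≠ y₂) (hy₁y₂ : y₁ ≠ y₂)
    (hN : G.neighborSet y = {x, y₁, y₂})
    (hy₂deg : G.degree y₂ = k - 3)
    (c : Sym2 V → Fin k) (hc : IsStarEdgeColoring (G.deleteVert x) k c) :
    (∀ yi ∈ ({y₁, y₂} : Set V),
      ∀ v ∈ (G.deleteVert x).neighborSet yi \ {y},
        c s(y, yi) ∈ colorsAt (G.deleteVert x) c v ∧ 2 ≤ G.degree v) ∧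
    (insert y₁ (G.neighborSet y₁)) ∩ (insert y₂ (G.neighborSet y₂)) = {y} := by
  have hHG := deleteVert_le G x
  have hxadj := adj_iff_of_degree_eq_one hx hxy
  have hyadj := deleteVert_adj_iff_of_neighborSet_eq hN hxy.ne' hxy₁ hxy₂
  have hyy₁ := hyadj y₁ |>.2 (Or.inl rfl)
  have hyy₂ := hyadj y₂ |>.2 (Or.inr rfl)
  have hdeg : G.degree y₁ + G.degree y₂ ≤ k := by
    -- `y₂ ∼ y` excludes the truncated case `k - 3 = 0` of `hy₂deg`
    have := hsub y₁
    have := G.degree_pos_iff_exists_adj y₂ |>.mpr ⟨y, hyy₂.1.symm⟩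
    omega
  have hblocked := hc.allColorsBlocked hcrit.1 hxadj
  have hseen := (blockingNeighbors_tight hHG hyadj hdeg hblocked).1
  have hG₁ := deleteVert_adj_iff_of_not_adj hxy₁.symm fun h => hyy₁.ne' ((hxadj y₁).1 h.symm)
  have hG₂ := deleteVert_adj_iff_of_not_adj hxy₂.symm fun h => hyy₂.ne' ((hxadj y₂).1 h.symm)
  refine ⟨fun yi hyi v ⟨hv, hvy⟩ => ?_, inter_insert_neighborSet_eq_singleton hyy₁.1 hyy₂.1 hy₁y₂
    (fun h => not_adj_of_blocked hHG hyadj hdeg hblocked ((hG₁ _).2 h))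
    fun z hz₁ hz₂ => eq_of_adj_of_adj_of_blocked hHG hc hyadj hy₁y₂ hdeg hblocked
      ((hG₁ z).2 hz₁) ((hG₂ z).2 hz₂) (hsub z)⟩
  have hyyi := (hyadj yi).2 hyi
  have hcol := hseen yi hyyi v hv hvy
  exact ⟨hcol, two_le_degree_of_mem_colorsAt hHG hc hyyi hv hvy hcol⟩

/-- Lemma 1(c): if moreover `d(y₂) = k - 3`, then for each `i ∈ {1,2}` and each
`v ∈ N_H(y_i) \ {y}`, the color of the edge `y y_i` appears at `v` and `d_G(v) ≥ 2`;
moreover `N_G[y₁] ∩ N_G[y₂] = {y}`. -/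
theorem lemma1c {V : Type*} [Fintype V] [DecidableEq V] (G : SimpleGraph V)
    [DecidableRel G.Adj] (hsub : ∀ v : V, G.degree v ≤ 3)
    (k : ℕ) (hk : k = 5 ∨ k = 6) (hcrit : StarCritical G k)
    (x y y₁ y₂ : V) (hx : G.degree x = 1) (hxy : G.Adj x y)
    (hxy₁ : x ≠ y₁) (hxy₂ : x ≠ y₂) (hy₁y₂ : y₁ ≠ y₂)
    (hN : G.neighborSet y = {x, y₁, y₂})
    (hdeg : G.degree y₂ ≤ G.degree y₁)
    (hy₂deg : G.degree y₂ = k - 3)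
    (c : Sym2 V → Fin k) (hc : IsStarEdgeColoring (G.deleteVert x) k c) :
    (∀ yi ∈ ({y₁, y₂} : Set V),
      ∀ v ∈ (G.deleteVert x).neighborSet yi \ {y},
        c s(y, yi) ∈ colorsAt (G.deleteVert x) c v ∧ 2 ≤ G.degree v) ∧
    (insert y₁ (G.neighborSet y₁)) ∩ (insert y₂ (G.neighborSet y₂)) = {y} :=
  lemma1c_general G hsub k hcrit x y y₁ y₂ hx hxy hxy₁ hxy₂ hy₁y₂ hN hy₂deg c hc
end

section
/- Let G be a star 5-critical subcubic simple graph, let x be a vertex of degree 1 with neighbor y, and write N_G(y) = {x, y₁, y₂} with d_G(y₁) ≥ d_G(y₂). If d_G(y₂) = 3, then either every vertex of N_G(y₁) has degree at least 2, or every vertex of N_G(y₂) has degree at least 2. -/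
/-!
Suppose `y₁` and `y₂` both have a leaf neighbour `w₁`, `w₂`, and let `zᵢ` be the remaining
neighbour of `yᵢ`. Take a star 5-edge-colouring of `G - x` and colour `xy` with a colour `α`
avoiding the four colours of `yy₁`, `yy₂`, `y₁z₁`, `y₂z₂`. A bicoloured path on four edges through
the pendant edge `xy` must be `x y yᵢ a b` with `c(yᵢa) = α`; then `a` is neither `y` nor `zᵢ`, so
`a = wᵢ`, a leaf, and the path cannot continue. So `G` is star 5-edge-colourable, contradicting
criticality.
-/

open SimpleGraph

namespace SimpleGraph

variable {V : Type*} {G : SimpleGraph V}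

theorem eq_of_adj_of_degree_le_one {u a v : V} [Fintype (G.neighborSet u)]
    (h : G.degree u ≤ 1) (ha : G.Adj u a) (hv : G.Adj u v) : v = a :=
  Finset.card_le_one.mp h v ((G.mem_neighborFinset u v).mpr hv) a
    ((G.mem_neighborFinset u a).mpr ha)

theorem exists_adj_eq_or_eq_or_eq_of_degree_le_three [DecidableEq V] {v a b : V}
    [Fintype (G.neighborSet v)] (h : G.degree v ≤ 3) (ha : G.Adj v a) (hb : G.Adj v b)
    (hab : a ≠ b) : ∃ z, ∀ w, G.Adj v w → w = a ∨ w = b ∨ w = z := by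
  have : Nonempty V := ⟨v⟩
  have hcard : (((G.neighborFinset v).erase a).erase b).card ≤ 1 := by
    rw [Finset.card_erase_of_mem (by simpa using ⟨hab.symm, hb⟩),
      Finset.card_erase_of_mem (by simpa using ha), card_neighborFinset_eq_degree]
    omega
  obtain ⟨z, hz⟩ := Finset.card_le_one_iff_subset_singleton.mp hcard
  refine ⟨z, fun w hw => ?_⟩
  by_contra! hne
  exact hne.2.2 (Finset.mem_singleton.mp (hz (by simpa using ⟨hne.2.1, hne.1, hw⟩)))

end SimpleGraph

section

variable {V : Type*} {G : SimpleGraph V} {k : ℕ} {c : Sym2 V → Fin k}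

theorem IsStarEdgeColoring.ne_of_adj_s10 (hc : IsStarEdgeColoring G k c) {v a b : V}
    (ha : G.Adj v a) (hb : G.Adj v b) (hab : a ≠ b) : c s(v, a) ≠ c s(v, b) :=
  hc.1 _ ha _ hb (fun h => hab (Sym2.congr_right.mp h))
    ⟨v, Sym2.mem_mk_left v a, Sym2.mem_mk_left v b⟩

theorem IsStarEdgeColoring.of_adj
    (hproper : ∀ v a b, G.Adj v a → G.Adj v b → a ≠ b → c s(v, a) ≠ c s(v, b))
    (hstar : ∀ v₀ v₁ v₂ v₃ v₄ : V, G.Adj v₀ v₁ → G.Adj v₁ v₂ → G.Adj v₂ v₃ → G.Adj v₃ v₄ →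
      ([s(v₀, v₁), s(v₁, v₂), s(v₂, v₃), s(v₃, v₄)] : List (Sym2 V)).Pairwise (· ≠ ·) →
      ¬(c s(v₀, v₁) = c s(v₂, v₃) ∧ c s(v₁, v₂) = c s(v₃, v₄))) :
    IsStarEdgeColoring G k c := by
  refine ⟨?_, hstar⟩
  rintro e₁ he₁ e₂ he₂ hne ⟨v, hv₁, hv₂⟩
  obtain ⟨a, rfl⟩ := Sym2.mem_iff_exists.mp hv₁
  obtain ⟨b, rfl⟩ := Sym2.mem_iff_exists.mp hv₂
  exact hproper v a b he₁ he₂ (by rintro rfl; exact hne rfl)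

end

section LeafExtension

variable {V : Type*} [DecidableEq V] {G : SimpleGraph V} {k : ℕ} {c : Sym2 V → Fin k}
  {x y : V} {α : Fin k}

theorem update_apply_mk_of_ne {a b : V} (ha : a ≠ x) (hb : b ≠ x) :
    Function.update c s(x, y) α s(a, b) = c s(a, b) := by
  refine Function.update_of_ne (fun h => ?_) _ _
  rcases Sym2.mem_iff.mp (h ▸ Sym2.mem_mk_left x y) with h | h
  exacts [ha h.symm, hb h.symm]

theorem update_leaf_ne_of_adj (hc : IsStarEdgeColoring (G.deleteVert x) k c)
    (hx : ∀ v, G.Adj x v → v = y) (hproper : ∀ u, G.Adj y u → u ≠ x → c s(y, u) ≠ α)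
    {v a b : V} (ha : G.Adj v a) (hb : G.Adj v b) (hab : a ≠ b) :
    Function.update c s(x, y) α s(v, a) ≠ Function.update c s(x, y) α s(v, b) := by
  have hvx : v ≠ x := by
    rintro rfl
    exact hab ((hx a ha).trans (hx b hb).symm)
  have at_x : ∀ {a b}, G.Adj v a → G.Adj v b → a = x → b ≠ x →
      Function.update c s(x, y) α s(v, a) ≠ Function.update c s(x, y) α s(v, b) := by
    rintro a b ha hb rfl hbx
    obtain rfl := hx v ha.symm
    have hswap : s(v, a) = s(a, v) := Sym2.eq_swap
    rw [hswap, Function.update_self, update_apply_mk_of_ne hvx hbx]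
    exact (hproper b hb hbx).symm
  by_cases hax : a = x
  · exact at_x ha hb hax (hax ▸ hab.symm)
  by_cases hbx : b = x
  · exact (at_x hb ha hbx hax).symm
  rw [update_apply_mk_of_ne hvx hax, update_apply_mk_of_ne hvx hbx]
  exact hc.ne_of_adj_s10 ⟨ha, hvx, hax⟩ ⟨hb, hvx, hbx⟩ hab

theorem update_leaf_not_bicolored_of_start (hx : ∀ v, G.Adj x v → v = y)
    (hpath : ∀ u a b, G.Adj y u → G.Adj u a → G.Adj a b → u ≠ x → a ≠ y → b ≠ u →
      c s(u, a) = α → c s(y, u) ≠ c s(a, b))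
    {v₀ v₁ v₂ v₃ v₄ : V} (h₀ : v₀ = x) (h₀₁ : G.Adj v₀ v₁) (h₁₂ : G.Adj v₁ v₂)
    (h₂₃ : G.Adj v₂ v₃) (h₃₄ : G.Adj v₃ v₄) (h₀₁₂ : s(v₀, v₁) ≠ s(v₁, v₂))
    (h₁₂₃ : s(v₁, v₂) ≠ s(v₂, v₃)) (h₂₃₄ : s(v₂, v₃) ≠ s(v₃, v₄)) :
    ¬(Function.update c s(x, y) α s(v₀, v₁) = Function.update c s(x, y) α s(v₂, v₃) ∧
      Function.update c s(x, y) α s(v₁, v₂) = Function.update c s(x, y) α s(v₃, v₄)) := by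
  subst h₀
  obtain rfl := hx v₁ h₀₁
  have hv₁ : v₁ ≠ v₀ := h₀₁.ne.symm
  have hv₂ : v₂ ≠ v₀ := by rintro rfl; exact h₀₁₂ Sym2.eq_swap
  have hv₃₁ : v₃ ≠ v₁ := by rintro rfl; exact h₁₂₃ Sym2.eq_swap
  have hv₄₂ : v₄ ≠ v₂ := by rintro rfl; exact h₂₃₄ Sym2.eq_swap
  have hv₃ : v₃ ≠ v₀ := by rintro rfl; exact h₁₂.ne (hx v₂ h₂₃.symm).symm
  have hv₄ : v₄ ≠ v₀ := by rintro rfl; exact hv₃₁ (hx v₃ h₃₄.symm)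
  rw [Function.update_self, update_apply_mk_of_ne hv₂ hv₃, update_apply_mk_of_ne hv₁ hv₂,
    update_apply_mk_of_ne hv₃ hv₄]
  exact fun ⟨hc₀₂, hc₁₃⟩ => hpath v₂ v₃ v₄ h₁₂ h₂₃ h₃₄ hv₂ hv₃₁ hv₄₂ hc₀₂.symm hc₁₃

theorem IsStarEdgeColoring.update_leaf (hc : IsStarEdgeColoring (G.deleteVert x) k c)
    (hx : ∀ v, G.Adj x v → v = y) (hproper : ∀ u, G.Adj y u → u ≠ x → c s(y, u) ≠ α)
    (hpath : ∀ u a b, G.Adj y u → G.Adj u a → G.Adj a b → u ≠ x → a ≠ y → b ≠ u →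
      c s(u, a) = α → c s(y, u) ≠ c s(a, b)) :
    IsStarEdgeColoring G k (Function.update c s(x, y) α) := by
  refine .of_adj (fun v a b => update_leaf_ne_of_adj hc hx hproper) ?_
  intro v₀ v₁ v₂ v₃ v₄ h₀₁ h₁₂ h₂₃ h₃₄ hpw
  have hpw' := hpw
  simp only [List.pairwise_cons, List.mem_cons, List.not_mem_nil, or_false, forall_eq_or_imp,
    forall_eq, List.Pairwise.nil, and_true] at hpw'
  obtain ⟨⟨h₀₁₂, -, -⟩, ⟨h₁₂₃, -⟩, h₂₃₄, -⟩ := hpw'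
  -- `x` is a leaf, so it cannot be an inner vertex of a walk whose consecutive edges differ.
  have hmid : ∀ {p m q}, G.Adj p m → G.Adj m q → s(p, m) ≠ s(m, q) → m ≠ x := by
    rintro p m q hpm hmq hne rfl
    rw [hx p hpm.symm, hx q hmq] at hne
    exact hne Sym2.eq_swap
  by_cases h₀ : v₀ = x
  · exact update_leaf_not_bicolored_of_start hx hpath h₀ h₀₁ h₁₂ h₂₃ h₃₄ h₀₁₂ h₁₂₃ h₂₃₄
  by_cases h₄ : v₄ = x
  · rintro ⟨h₀₂, h₁₃⟩
    refine update_leaf_not_bicolored_of_start hx hpath h₄ h₃₄.symm h₂₃.symm h₁₂.symm h₀₁.symm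
      ?_ ?_ ?_ ⟨?_, ?_⟩ <;>
    simp only [Sym2.eq_swap] at h₀₁₂ h₁₂₃ h₂₃₄ h₀₂ h₁₃ ⊢ <;> tauto
  have h₁ := hmid h₀₁ h₁₂ h₀₁₂
  have h₂ := hmid h₁₂ h₂₃ h₁₂₃
  have h₃ := hmid h₂₃ h₃₄ h₂₃₄
  rw [update_apply_mk_of_ne h₀ h₁, update_apply_mk_of_ne h₁ h₂,
    update_apply_mk_of_ne h₂ h₃, update_apply_mk_of_ne h₃ h₄]
  exact hc.2 _ _ _ _ _ ⟨h₀₁, h₀, h₁⟩ ⟨h₁₂, h₁, h₂⟩ ⟨h₂₃, h₂, h₃⟩ ⟨h₃₄, h₃, h₄⟩ hpw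

end LeafExtension

theorem exists_fin_notMem_of_five_le {k : ℕ} (hk : 5 ≤ k) (a b c d : Fin k) :
    ∃ α : Fin k, α ∉ ({a, b, c, d} : Finset (Fin k)) := by
  have hcard : ({a, b, c, d} : Finset (Fin k)).card < (Finset.univ : Finset (Fin k)).card := by
    rw [Finset.card_univ, Fintype.card_fin]
    exact Finset.card_le_four.trans_lt hk
  obtain ⟨α, -, hα⟩ := Finset.exists_mem_notMem_of_card_lt_card hcard
  exact ⟨α, hα⟩

theorem starEdgeColorable_of_leaf_of_pendant_neighbors {V : Type*} [DecidableEq V]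
    {G : SimpleGraph V} {k : ℕ} (hk : 5 ≤ k) {x y y₁ y₂ w₁ w₂ z₁ z₂ : V}
    (hx : ∀ v, G.Adj x v → v = y) (hy : ∀ v, G.Adj y v → v = x ∨ v = y₁ ∨ v = y₂)
    (hw₁ : ∀ v, G.Adj w₁ v → v = y₁) (hw₂ : ∀ v, G.Adj w₂ v → v = y₂)
    (hy₁ : ∀ v, G.Adj y₁ v → v = y ∨ v = w₁ ∨ v = z₁)
    (hy₂ : ∀ v, G.Adj y₂ v → v = y ∨ v = w₂ ∨ v = z₂)
    (h : StarEdgeColorable (G.deleteVert x) k) : StarEdgeColorable G k := by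
  obtain ⟨c, hc⟩ := h
  obtain ⟨α, hα⟩ :=
    exists_fin_notMem_of_five_le hk (c s(y, y₁)) (c s(y, y₂)) (c s(y₁, z₁)) (c s(y₂, z₂))
  simp only [Finset.mem_insert, Finset.mem_singleton, not_or] at hα
  obtain ⟨hα₁, hα₂, hαz₁, hαz₂⟩ := hα
  have hpendant : ∀ {u w z}, (∀ v, G.Adj w v → v = u) →
      (∀ v, G.Adj u v → v = y ∨ v = w ∨ v = z) → α ≠ c s(u, z) →
      ∀ a b, G.Adj u a → G.Adj a b → a ≠ y → b ≠ u → c s(u, a) ≠ α := by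
    intro u w z hw hu hz a b ha hab hay hbu hca
    rcases hu a ha with rfl | rfl | rfl
    · exact hay rfl
    · exact hbu (hw b hab)
    · exact hz hca.symm
  refine ⟨_, hc.update_leaf (α := α) hx (fun u hu hux => ?_)
    (fun u a b hu ha hab hux hay hbu hca => ?_)⟩
  · rcases (hy u hu).resolve_left hux with rfl | rfl
    exacts [Ne.symm hα₁, Ne.symm hα₂]
  · rcases (hy u hu).resolve_left hux with rfl | rfl
    exacts [absurd hca (hpendant hw₁ hy₁ hαz₁ a b ha hab hay hbu),
      absurd hca (hpendant hw₂ hy₂ hαz₂ a b ha hab hay hbu)]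

theorem lemma1g_general {V : Type*} [Fintype V] [DecidableEq V] (G : SimpleGraph V)
    [DecidableRel G.Adj] (hsub : ∀ v : V, G.degree v ≤ 3)
    (hcrit : StarCritical G 5)
    (x y y₁ y₂ : V) (hx : G.degree x = 1) (hxy : G.Adj x y)
    (hxy₁ : x ≠ y₁) (hxy₂ : x ≠ y₂)
    (hN : G.neighborSet y = {x, y₁, y₂}) :
    (∀ u ∈ G.neighborSet y₁, 2 ≤ G.degree u) ∨
    (∀ u ∈ G.neighborSet y₂, 2 ≤ G.degree u) := by
  by_contra! hcon
  obtain ⟨⟨w₁, hw₁, hdw₁⟩, w₂, hw₂, hdw₂⟩ := hcon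
  have hy : ∀ v, G.Adj y v → v = x ∨ v = y₁ ∨ v = y₂ := fun v hv => by
    rw [← mem_neighborSet, hN] at hv
    simpa using hv
  have hyy₁ : G.Adj y y₁ := by simp [← mem_neighborSet, hN]
  have hyy₂ : G.Adj y y₂ := by simp [← mem_neighborSet, hN]
  have hleaf₁ : ∀ v, G.Adj w₁ v → v = y₁ := fun v =>
    eq_of_adj_of_degree_le_one (by omega) (G.adj_symm hw₁)
  have hleaf₂ : ∀ v, G.Adj w₂ v → v = y₂ := fun v =>
    eq_of_adj_of_degree_le_one (by omega) (G.adj_symm hw₂)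
  have hw₁y : w₁ ≠ y := by rintro rfl; exact hxy₁ (hleaf₁ x hxy.symm)
  have hw₂y : w₂ ≠ y := by rintro rfl; exact hxy₂ (hleaf₂ x hxy.symm)
  obtain ⟨z₁, hz₁⟩ :=
    exists_adj_eq_or_eq_or_eq_of_degree_le_three (hsub y₁) hyy₁.symm hw₁ hw₁y.symm
  obtain ⟨z₂, hz₂⟩ :=
    exists_adj_eq_or_eq_or_eq_of_degree_le_three (hsub y₂) hyy₂.symm hw₂ hw₂y.symm
  exact hcrit.1 <| starEdgeColorable_of_leaf_of_pendant_neighbors le_rfl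
    (fun v => eq_of_adj_of_degree_le_one hx.le hxy) hy hleaf₁ hleaf₂ hz₁ hz₂ (hcrit.2 x)

/-- Lemma 1(g): `k = 5` case. If `d(y₂) = 3`, then either every vertex of `N_G(y₁)`
has degree at least 2, or every vertex of `N_G(y₂)` has degree at least 2. -/
theorem lemma1g {V : Type*} [Fintype V] [DecidableEq V] (G : SimpleGraph V)
    [DecidableRel G.Adj] (hsub : ∀ v : V, G.degree v ≤ 3)
    (hcrit : StarCritical G 5)
    (x y y₁ y₂ : V) (hx : G.degree x = 1) (hxy : G.Adj x y)
    (hxy₁ : x ≠ y₁) (hxy₂ : x ≠ y₂) (hy₁y₂ : y₁ ≠ y₂)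
    (hN : G.neighborSet y = {x, y₁, y₂})
    (hdeg : G.degree y₂ ≤ G.degree y₁)
    (hy₂deg : G.degree y₂ = 3) :
    (∀ u ∈ G.neighborSet y₁, 2 ≤ G.degree u) ∨
    (∀ u ∈ G.neighborSet y₂, 2 ≤ G.degree u) :=
  lemma1g_general G hsub hcrit x y y₁ y₂ hx hxy hxy₁ hxy₂ hN
end

section
/- Let k ∈ {5,6}, let G be a star k-critical subcubic simple graph, and let x be a vertex of degree 2 with N_G(x) = {z, w}, where d_G(z) ≤ d_G(w). If z and w are nonadjacent in G, then d_G(w) = 3. -/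
/-! If `d(w) ≤ 2`, then `z` and `w` each have at most one neighbour besides `x`. Take a star
`k`-edge-colouring `c` of `G - x`, colour `xw` with a colour `α` seen neither at `z` nor at any
neighbour of `w` (at most `1 + 3` colours are excluded), and `xz` with a colour `β ≠ α` seen at
no neighbour of `z` (at most `3 + 1` excluded); `k ≥ 5` leaves room for both. Since `z` and `w`
are nonadjacent, no trail of three edges that starts with `xw` ends in an `α`-edge, and none
that starts with `xz` and does not continue along `xw` ends in a `β`-edge. A bicoloured path or
cycle of length four is made of two trails of three edges whose end edges share a colour, so
it avoids `x` and would already be bicoloured under `c`. Hence `G` is star `k`-edge-colourable,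
contradicting criticality. -/

open SimpleGraph

namespace SimpleGraph

variable {V : Type*} {G : SimpleGraph V} {x u : V}

theorem deleteVert_le : G.deleteVert x ≤ G := fun _ _ h => h.1

theorem ncard_neighborSet_eq_degree [Fintype V] [DecidableRel G.Adj] :
    (G.neighborSet u).ncard = G.degree u := by
  rw [← Nat.card_coe_set_eq, Nat.card_eq_fintype_card, card_neighborSet_eq_degree]

theorem ncard_neighborSet_deleteVert_le [Fintype V] [DecidableRel G.Adj] :
    ((G.deleteVert x).neighborSet u).ncard ≤ G.degree u :=
  ncard_neighborSet_eq_degree (G := G) ▸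
    Set.ncard_le_ncard (neighborSet_mono deleteVert_le u)

theorem ncard_neighborSet_deleteVert_lt [Fintype V] [DecidableRel G.Adj] (h : G.Adj x u) :
    ((G.deleteVert x).neighborSet u).ncard < G.degree u := by
  rw [← ncard_neighborSet_eq_degree]
  refine Set.ncard_lt_ncard (Set.ssubset_iff_of_subset
    (neighborSet_mono deleteVert_le u) |>.2 ⟨x, h.symm, fun hx => hx.2.2 rfl⟩)

end SimpleGraph

theorem Set.ncard_biUnion_le_of_subsingleton {ι α : Type*} {t : Set ι} (ht : t.Subsingleton)
    {s : ι → Set α} {n : ℕ} (h : ∀ i ∈ t, (s i).ncard ≤ n) : (⋃ i ∈ t, s i).ncard ≤ n := by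
  rcases ht.eq_empty_or_singleton with rfl | ⟨i, rfl⟩ <;> simp_all

theorem Fin.exists_notMem_of_ncard_lt {k : ℕ} {S : Set (Fin k)} (h : S.ncard < k) :
    ∃ a, a ∉ S := by
  by_contra! hS
  rw [Set.eq_univ_of_forall hS, Set.ncard_univ, Nat.card_eq_fintype_card, Fintype.card_fin] at h
  exact h.false

theorem ncard_colorsAt_le {V : Type*} [Finite V] (H : SimpleGraph V) {k : ℕ}
    (c : Sym2 V → Fin k) (u : V) : (colorsAt H c u).ncard ≤ (H.neighborSet u).ncard :=
  Set.ncard_image_le (Set.toFinite _)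

theorem forall_edge_ne_of_forall_adj_ne {V : Type*} {G : SimpleGraph V} {k : ℕ}
    {c : Sym2 V → Fin k} (h : ∀ a b p, G.Adj a b → G.Adj a p → b ≠ p → c s(a, b) ≠ c s(a, p)) :
    ∀ e₁ ∈ G.edgeSet, ∀ e₂ ∈ G.edgeSet, e₁ ≠ e₂ → (∃ v, v ∈ e₁ ∧ v ∈ e₂) → c e₁ ≠ c e₂ := by
  rintro e₁ he₁ e₂ he₂ hne ⟨v, hv₁, hv₂⟩
  obtain ⟨b, rfl⟩ := Sym2.mem_iff_exists.1 hv₁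
  obtain ⟨p, rfl⟩ := Sym2.mem_iff_exists.1 hv₂
  exact h v b p he₁ he₂ (by rintro rfl; exact hne rfl)

theorem eq_or_eq_of_adj_of_neighborSet_eq {V : Type*} {G : SimpleGraph V} {x z w a : V}
    (hNx : G.neighborSet x = {z, w}) (h : G.Adj x a) :
    a = z ∨ a = w := by
  simpa [hNx] using (show a ∈ G.neighborSet x from h)

theorem ne_of_adj_of_neighborSet_eq {V : Type*} {G : SimpleGraph V} {x z w a b : V}
    (hNx : G.neighborSet x = {z, w}) (hab : G.Adj a b)
    (hz : s(a, b) ≠ s(x, z)) (hw : s(a, b) ≠ s(x, w)) : a ≠ x ∧ b ≠ x := by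
  constructor <;> rintro rfl
  · rcases eq_or_eq_of_adj_of_neighborSet_eq hNx hab with rfl | rfl <;> simp_all
  · rcases eq_or_eq_of_adj_of_neighborSet_eq hNx hab.symm with rfl | rfl <;>
      simp_all [Sym2.eq_swap]

section Extension

variable {V : Type*} [DecidableEq V] {G : SimpleGraph V} {k : ℕ} {c : Sym2 V → Fin k}
  {x z w a b p : V} {α β : Fin k}

def extendColoring (c : Sym2 V → Fin k) (x z w : V) (α β : Fin k) : Sym2 V → Fin k :=
  Function.update (Function.update c s(x, z) β) s(x, w) α

theorem extendColoring_xz (hzw : z ≠ w) : extendColoring c x z w α β s(x, z) = β := by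
  rw [extendColoring, Function.update_of_ne (mt Sym2.congr_right.1 hzw), Function.update_self]

theorem extendColoring_xw : extendColoring c x z w α β s(x, w) = α := by
  simp [extendColoring]

theorem extendColoring_of_ne (ha : a ≠ x) (hb : b ≠ x) :
    extendColoring c x z w α β s(a, b) = c s(a, b) := by
  simp [extendColoring, ha, hb]

theorem extendColoring_ne_of_adj_x (hNx : G.neighborSet x = {z, w}) (hzw : z ≠ w)
    (hβz : ∀ u, (G.deleteVert x).Adj z u → β ∉ colorsAt (G.deleteVert x) c u)
    (hαw : ∀ u, (G.deleteVert x).Adj w u → α ∉ colorsAt (G.deleteVert x) c u)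
    (hax : G.Adj a x) (hap : G.Adj a p) (hpx : p ≠ x) :
    extendColoring c x z w α β s(a, x) ≠ extendColoring c x z w α β s(a, p) := by
  have hxa : a ≠ x := hax.ne
  rw [Sym2.eq_swap, extendColoring_of_ne hxa hpx]
  rcases eq_or_eq_of_adj_of_neighborSet_eq hNx hax.symm with rfl | rfl
  · rw [extendColoring_xz hzw]
    exact fun h => hβz p ⟨hap, hxa, hpx⟩ ⟨a, ⟨hap.symm, hpx, hxa⟩, by rw [Sym2.eq_swap, h]⟩
  · rw [extendColoring_xw]
    exact fun h => hαw p ⟨hap, hxa, hpx⟩ ⟨a, ⟨hap.symm, hpx, hxa⟩, by rw [Sym2.eq_swap, h]⟩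

theorem extendColoring_ne_of_adj (hNx : G.neighborSet x = {z, w}) (hzw : z ≠ w)
    (hc : IsStarEdgeColoring (G.deleteVert x) k c) (hαβ : α ≠ β)
    (hβz : ∀ u, (G.deleteVert x).Adj z u → β ∉ colorsAt (G.deleteVert x) c u)
    (hαw : ∀ u, (G.deleteVert x).Adj w u → α ∉ colorsAt (G.deleteVert x) c u)
    (hab : G.Adj a b) (hap : G.Adj a p) (hbp : b ≠ p) :
    extendColoring c x z w α β s(a, b) ≠ extendColoring c x z w α β s(a, p) := by
  by_cases ha : a = x
  · subst ha
    rcases eq_or_eq_of_adj_of_neighborSet_eq hNx hab with rfl | rfl <;>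
      rcases eq_or_eq_of_adj_of_neighborSet_eq hNx hap with rfl | rfl <;>
      simp_all [extendColoring_xz, extendColoring_xw, Ne.symm hαβ]
  by_cases hb : b = x
  · subst hb
    exact extendColoring_ne_of_adj_x hNx hzw hβz hαw hab hap (Ne.symm hbp)
  by_cases hp : p = x
  · subst hp
    exact (extendColoring_ne_of_adj_x hNx hzw hβz hαw hap hab hbp).symm
  rw [extendColoring_of_ne ha hb, extendColoring_of_ne ha hp]
  exact hc.1 s(a, b) (show (G.deleteVert x).Adj a b from ⟨hab, ha, hb⟩)
    s(a, p) (show (G.deleteVert x).Adj a p from ⟨hap, ha, hp⟩) (mt Sym2.congr_right.1 hbp)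
    ⟨a, Sym2.mem_mk_left a b, Sym2.mem_mk_left a p⟩

theorem extendColoring_ne_of_trail_xw (hNx : G.neighborSet x = {z, w}) (hnadj : ¬ G.Adj z w)
    (hαz : α ∉ colorsAt (G.deleteVert x) c z)
    (hαw : ∀ u, (G.deleteVert x).Adj w u → α ∉ colorsAt (G.deleteVert x) c u)
    {v₀ v₁ v₂ v₃ : V} (h₀₁ : G.Adj v₀ v₁) (h₁₂ : G.Adj v₁ v₂) (h₂₃ : G.Adj v₂ v₃)
    (h₀₂ : v₀ ≠ v₂) (h₁₃ : v₁ ≠ v₃) (h : s(v₀, v₁) = s(x, w)) :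
    extendColoring c x z w α β s(v₂, v₃) ≠ α := by
  rcases Sym2.eq_iff.1 h with ⟨h₀, h₁⟩ | ⟨h₀, h₁⟩ <;> subst v₀ v₁
  · have h₃ : v₃ ≠ x := by
      rintro rfl
      rcases eq_or_eq_of_adj_of_neighborSet_eq hNx h₂₃.symm with rfl | rfl
      · exact hnadj h₁₂.symm
      · exact h₁₂.ne rfl
    rw [extendColoring_of_ne (Ne.symm h₀₂) h₃]
    exact fun h => hαw v₂ ⟨h₁₂, h₀₁.ne.symm, Ne.symm h₀₂⟩ ⟨v₃, ⟨h₂₃, Ne.symm h₀₂, h₃⟩, h⟩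
  · obtain rfl : v₂ = z :=
      (eq_or_eq_of_adj_of_neighborSet_eq hNx h₁₂).resolve_right (Ne.symm h₀₂)
    rw [extendColoring_of_ne h₁₂.ne.symm (Ne.symm h₁₃)]
    exact fun h => hαz ⟨v₃, ⟨h₂₃, h₁₂.ne.symm, Ne.symm h₁₃⟩, h⟩

theorem extendColoring_ne_of_trail_xz (hNx : G.neighborSet x = {z, w}) (hnadj : ¬ G.Adj z w)
    (hβz : ∀ u, (G.deleteVert x).Adj z u → β ∉ colorsAt (G.deleteVert x) c u)
    {v₀ v₁ v₂ v₃ : V} (h₀₁ : G.Adj v₀ v₁) (h₁₂ : G.Adj v₁ v₂) (h₂₃ : G.Adj v₂ v₃)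
    (h₀₂ : v₀ ≠ v₂) (h₁₃ : v₁ ≠ v₃) (hmid : s(v₁, v₂) ≠ s(x, w)) (h : s(v₀, v₁) = s(x, z)) :
    extendColoring c x z w α β s(v₂, v₃) ≠ β := by
  rcases Sym2.eq_iff.1 h with ⟨h₀, h₁⟩ | ⟨h₀, h₁⟩ <;> subst v₀ v₁
  · have h₃ : v₃ ≠ x := by
      rintro rfl
      rcases eq_or_eq_of_adj_of_neighborSet_eq hNx h₂₃.symm with rfl | rfl
      · exact h₁₂.ne rfl
      · exact hnadj h₁₂
    rw [extendColoring_of_ne (Ne.symm h₀₂) h₃]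
    exact fun h => hβz v₂ ⟨h₁₂, h₀₁.ne.symm, Ne.symm h₀₂⟩ ⟨v₃, ⟨h₂₃, Ne.symm h₀₂, h₃⟩, h⟩
  · obtain rfl : v₂ = w :=
      (eq_or_eq_of_adj_of_neighborSet_eq hNx h₁₂).resolve_left (Ne.symm h₀₂)
    exact absurd rfl hmid

theorem extendColoring_trail_ends_ne_xw (hNx : G.neighborSet x = {z, w}) (hnadj : ¬ G.Adj z w)
    (hαz : α ∉ colorsAt (G.deleteVert x) c z)
    (hαw : ∀ u, (G.deleteVert x).Adj w u → α ∉ colorsAt (G.deleteVert x) c u)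
    {v₀ v₁ v₂ v₃ : V} (h₀₁ : G.Adj v₀ v₁) (h₁₂ : G.Adj v₁ v₂) (h₂₃ : G.Adj v₂ v₃)
    (h₀₂ : v₀ ≠ v₂) (h₁₃ : v₁ ≠ v₃)
    (hcol : extendColoring c x z w α β s(v₀, v₁) = extendColoring c x z w α β s(v₂, v₃)) :
    s(v₀, v₁) ≠ s(x, w) ∧ s(v₂, v₃) ≠ s(x, w) := by
  constructor
  · intro h
    refine extendColoring_ne_of_trail_xw (β := β) hNx hnadj hαz hαw h₀₁ h₁₂ h₂₃ h₀₂ h₁₃ h ?_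
    rw [← hcol, h, extendColoring_xw]
  · intro h
    refine extendColoring_ne_of_trail_xw (β := β) hNx hnadj hαz hαw h₂₃.symm h₁₂.symm h₀₁.symm
      h₁₃.symm h₀₂.symm (by rw [Sym2.eq_swap, h]) ?_
    rw [Sym2.eq_swap, hcol, h, extendColoring_xw]

theorem extendColoring_trail_ends_ne_xz (hNx : G.neighborSet x = {z, w}) (hzw : z ≠ w)
    (hnadj : ¬ G.Adj z w)
    (hβz : ∀ u, (G.deleteVert x).Adj z u → β ∉ colorsAt (G.deleteVert x) c u)
    {v₀ v₁ v₂ v₃ : V} (h₀₁ : G.Adj v₀ v₁) (h₁₂ : G.Adj v₁ v₂) (h₂₃ : G.Adj v₂ v₃)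
    (h₀₂ : v₀ ≠ v₂) (h₁₃ : v₁ ≠ v₃) (hmid : s(v₁, v₂) ≠ s(x, w))
    (hcol : extendColoring c x z w α β s(v₀, v₁) = extendColoring c x z w α β s(v₂, v₃)) :
    s(v₀, v₁) ≠ s(x, z) ∧ s(v₂, v₃) ≠ s(x, z) := by
  constructor
  · intro h
    refine extendColoring_ne_of_trail_xz (α := α) hNx hnadj hβz h₀₁ h₁₂ h₂₃ h₀₂ h₁₃ hmid h ?_
    rw [← hcol, h, extendColoring_xz hzw]
  · intro h
    refine extendColoring_ne_of_trail_xz (α := α) hNx hnadj hβz h₂₃.symm h₁₂.symm h₀₁.symm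
      h₁₃.symm h₀₂.symm (by rwa [Sym2.eq_swap]) (by rw [Sym2.eq_swap, h]) ?_
    rw [Sym2.eq_swap, hcol, h, extendColoring_xz hzw]

end Extension

theorem isStarEdgeColoring_extendColoring {V : Type*} [DecidableEq V] {G : SimpleGraph V}
    {k : ℕ} {c : Sym2 V → Fin k} {x z w : V} {α β : Fin k}
    (hNx : G.neighborSet x = {z, w}) (hzw : z ≠ w) (hnadj : ¬ G.Adj z w)
    (hc : IsStarEdgeColoring (G.deleteVert x) k c) (hαβ : α ≠ β)
    (hαz : α ∉ colorsAt (G.deleteVert x) c z)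
    (hαw : ∀ u, (G.deleteVert x).Adj w u → α ∉ colorsAt (G.deleteVert x) c u)
    (hβz : ∀ u, (G.deleteVert x).Adj z u → β ∉ colorsAt (G.deleteVert x) c u) :
    IsStarEdgeColoring G k (extendColoring c x z w α β) := by
  refine ⟨forall_edge_ne_of_forall_adj_ne fun a b p hab hap hbp =>
    extendColoring_ne_of_adj hNx hzw hc hαβ hβz hαw hab hap hbp, ?_⟩
  rintro v₀ v₁ v₂ v₃ v₄ h₀₁ h₁₂ h₂₃ h₃₄ hdist ⟨h₀₁₂₃, h₁₂₃₄⟩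
  have h₀₂ : v₀ ≠ v₂ := by rintro rfl; simp [Sym2.eq_swap] at hdist
  have h₁₃ : v₁ ≠ v₃ := by rintro rfl; simp [Sym2.eq_swap] at hdist
  have h₂₄ : v₂ ≠ v₄ := by rintro rfl; simp [Sym2.eq_swap] at hdist
  obtain ⟨hw₀₁, hw₂₃⟩ :=
    extendColoring_trail_ends_ne_xw hNx hnadj hαz hαw h₀₁ h₁₂ h₂₃ h₀₂ h₁₃ h₀₁₂₃
  obtain ⟨hw₁₂, hw₃₄⟩ :=
    extendColoring_trail_ends_ne_xw hNx hnadj hαz hαw h₁₂ h₂₃ h₃₄ h₁₃ h₂₄ h₁₂₃₄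
  obtain ⟨hz₀₁, hz₂₃⟩ :=
    extendColoring_trail_ends_ne_xz hNx hzw hnadj hβz h₀₁ h₁₂ h₂₃ h₀₂ h₁₃ hw₁₂ h₀₁₂₃
  obtain ⟨hz₁₂, hz₃₄⟩ :=
    extendColoring_trail_ends_ne_xz hNx hzw hnadj hβz h₁₂ h₂₃ h₃₄ h₁₃ h₂₄ hw₂₃ h₁₂₃₄
  obtain ⟨hx₀, hx₁⟩ := ne_of_adj_of_neighborSet_eq hNx h₀₁ hz₀₁ hw₀₁
  obtain ⟨-, hx₂⟩ := ne_of_adj_of_neighborSet_eq hNx h₁₂ hz₁₂ hw₁₂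
  obtain ⟨hx₃, hx₄⟩ := ne_of_adj_of_neighborSet_eq hNx h₃₄ hz₃₄ hw₃₄
  rw [extendColoring_of_ne hx₀ hx₁, extendColoring_of_ne hx₂ hx₃] at h₀₁₂₃
  rw [extendColoring_of_ne hx₁ hx₂, extendColoring_of_ne hx₃ hx₄] at h₁₂₃₄
  exact hc.2 v₀ v₁ v₂ v₃ v₄ ⟨h₀₁, hx₀, hx₁⟩ ⟨h₁₂, hx₁, hx₂⟩ ⟨h₂₃, hx₂, hx₃⟩ ⟨h₃₄, hx₃, hx₄⟩
    hdist ⟨h₀₁₂₃, h₁₂₃₄⟩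

theorem exists_colors_extendColoring {V : Type*} [Fintype V] {G : SimpleGraph V}
    [DecidableRel G.Adj] (hsub : ∀ v, G.degree v ≤ 3) {k : ℕ} (hk : 5 ≤ k) {x z w : V}
    (hxz : G.Adj x z) (hxw : G.Adj x w) (hdz : G.degree z ≤ 2) (hdw : G.degree w ≤ 2)
    (c : Sym2 V → Fin k) :
    ∃ α β : Fin k, α ≠ β ∧ α ∉ colorsAt (G.deleteVert x) c z ∧
      (∀ u, (G.deleteVert x).Adj w u → α ∉ colorsAt (G.deleteVert x) c u) ∧
      (∀ u, (G.deleteVert x).Adj z u → β ∉ colorsAt (G.deleteVert x) c u) := by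
  set H := G.deleteVert x
  have hleaf : ∀ v, G.Adj x v → G.degree v ≤ 2 → (H.neighborSet v).ncard ≤ 1 := fun v hv hdv =>
    Nat.le_of_lt_succ ((ncard_neighborSet_deleteVert_lt hv).trans_le (by omega))
  have hnear : ∀ v, G.Adj x v → G.degree v ≤ 2 →
      (⋃ u ∈ H.neighborSet v, colorsAt H c u).ncard ≤ 3 := fun v hv hdv =>
    Set.ncard_biUnion_le_of_subsingleton (Set.ncard_le_one_iff_subsingleton.1 (hleaf v hv hdv))
      fun u _ => (ncard_colorsAt_le H c u).trans (ncard_neighborSet_deleteVert_le.trans (hsub u))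
  obtain ⟨α, hα⟩ := Fin.exists_notMem_of_ncard_lt
    (S := colorsAt H c z ∪ ⋃ u ∈ H.neighborSet w, colorsAt H c u) <| by
    calc _ ≤ 1 + 3 := (Set.ncard_union_le _ _).trans <| add_le_add
            ((ncard_colorsAt_le H c z).trans (hleaf z hxz hdz)) (hnear w hxw hdw)
      _ < k := by omega
  obtain ⟨β, hβ⟩ := Fin.exists_notMem_of_ncard_lt
    (S := insert α (⋃ u ∈ H.neighborSet z, colorsAt H c u)) <| by
    calc _ ≤ 3 + 1 := (Set.ncard_insert_le _ _).trans (Nat.add_le_add_right (hnear z hxz hdz) 1)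
      _ < k := by omega
  refine ⟨α, β, fun h => hβ (h ▸ Set.mem_insert α _), fun h => hα (Or.inl h),
    fun u hu h => hα (Or.inr (Set.mem_biUnion hu h)),
    fun u hu h => hβ (Or.inr (Set.mem_biUnion hu h))⟩

theorem lemma2b_general {V : Type*} [Fintype V] [DecidableEq V] (G : SimpleGraph V)
    [DecidableRel G.Adj] (hsub : ∀ v : V, G.degree v ≤ 3)
    (k : ℕ) (hk : k = 5 ∨ k = 6) (hcrit : StarCritical G k)
    (x z w : V) (hzw : z ≠ w)
    (hNx : G.neighborSet x = {z, w}) (hd : G.degree z ≤ G.degree w)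
    (hnadj : ¬ G.Adj z w) :
    G.degree w = 3 := by
  by_contra hw
  have hdw : G.degree w ≤ 2 := by have := hsub w; omega
  have hxz : G.Adj x z := show z ∈ G.neighborSet x by simp [hNx]
  have hxw : G.Adj x w := show w ∈ G.neighborSet x by simp [hNx]
  obtain ⟨c, hc⟩ := hcrit.2 x
  obtain ⟨α, β, hαβ, hαz, hαw, hβz⟩ :=
    exists_colors_extendColoring hsub (by omega) hxz hxw (hd.trans hdw) hdw c
  exact hcrit.1 ⟨_, isStarEdgeColoring_extendColoring hNx hzw hnadj hc hαβ hαz hαw hβz⟩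

/-- Lemma 2(b): `x` has degree 2 with `N_G(x) = {z, w}`, `d(z) ≤ d(w)`.
If `z` and `w` are nonadjacent, then `d(w) = 3`. -/
theorem lemma2b {V : Type*} [Fintype V] [DecidableEq V] (G : SimpleGraph V)
    [DecidableRel G.Adj] (hsub : ∀ v : V, G.degree v ≤ 3)
    (k : ℕ) (hk : k = 5 ∨ k = 6) (hcrit : StarCritical G k)
    (x z w : V) (hx : G.degree x = 2) (hzw : z ≠ w)
    (hNx : G.neighborSet x = {z, w}) (hd : G.degree z ≤ G.degree w)
    (hnadj : ¬ G.Adj z w) :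
    G.degree w = 3 :=
  lemma2b_general G hsub k hk hcrit x z w hzw hNx hd hnadj
end
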